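/- For every α ∈ (0,1) and every instance, the α-Leftmost-of-Rightmost mechanism satisfies, in the case where the winner w and an optimal alternative o satisfy o < w: average-of-max cost of w is at most ((3-α)/(1-α)) times the average-of-max cost of o. -/

import Mathlib

/-!
Write `c_x(d) = max_{i ∈ N_d} |i - x|`. By the triangle inequality `c_w(d) ≤ c_o(d) + (w - o)` for
every district. Since `w` is the `⌈αk⌉`-th smallest representative, at least `(1 - α) k`
districts have `w ≤ y_d`; for those, the rightmost agent `m_d` is at least as close to `y_d` as
to `o`, so `w - o ≤ y_d - o ≤ 2 |m_d - o| ≤ 2 c_o(d)`. Summing, `(1 - α) k (w - o) ≤ 2 Σ c_o`, hence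
`(1 - α) Σ c_w ≤ (1 - α) Σ c_o + 2 Σ c_o = (3 - α) Σ c_o`.
-/

open Finset

theorem List.Pairwise.length_sub_le_countP_le {α : Type*} [Preorder α] [DecidableLE α] {L : List α}
    (hL : L.Pairwise (· ≤ ·)) {j : ℕ} {w : α} (hw : L[j]? = some w) :
    L.length - j ≤ L.countP (w ≤ ·) := by
  obtain ⟨hj, rfl⟩ := List.getElem?_eq_some_iff.mp hw
  have hge : ∀ x ∈ L.drop j, L[j] ≤ x := by
    have hdrop := hL.sublist (List.drop_sublist j L)
    rw [List.drop_eq_getElem_cons hj] at hdrop ⊢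
    exact List.forall_mem_cons.mpr ⟨le_rfl, (List.pairwise_cons.mp hdrop).1⟩
  calc L.length - j = (L.drop j).length := (List.length_drop ..).symm
    _ = (L.drop j).countP (L[j] ≤ ·) :=
      (List.countP_eq_length.mpr fun x hx => decide_eq_true (hge x hx)).symm
    _ ≤ L.countP (L[j] ≤ ·) := (List.drop_sublist j L).countP_le

theorem Finset.card_sub_le_card_filter_le_of_sort {ι α : Type*} [LinearOrder α]
    (s : Finset ι) (f : ι → α) {j : ℕ} {w : α}
    (hw : (Multiset.sort (s.val.map f) (· ≤ ·))[j]? = some w) :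
    #s - j ≤ #{i ∈ s | w ≤ f i} := by
  have hcount := (Multiset.pairwise_sort (s.val.map f) (· ≤ ·)).length_sub_le_countP_le hw
  rwa [← Multiset.coe_card, ← Multiset.coe_countP, Multiset.sort_eq, Multiset.countP_map,
    Multiset.card_map] at hcount

theorem Nat.cast_ceil_sub_one_le {R : Type*} [Semiring R] [LinearOrder R] [FloorSemiring R]
    {a : R} (ha : 0 ≤ a) : ((⌈a⌉₊ - 1 : ℕ) : R) ≤ a := by
  rcases Nat.eq_zero_or_pos ⌈a⌉₊ with h | h
  · simpa [h] using ha
  · exact (Nat.lt_ceil.mp (Nat.sub_one_lt h.ne')).le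

section Distances

variable {ι : Type*} {s : Finset ι} (hs : s.Nonempty) (q : ι → ℝ)

theorem Finset.abs_sup'_sub_le_sup'_abs_sub (x : ℝ) :
    |s.sup' hs q - x| ≤ s.sup' hs (fun i => |q i - x|) := by
  obtain ⟨i, hi, hq⟩ := s.exists_mem_eq_sup' hs q
  rw [hq]
  exact s.le_sup' (fun i => |q i - x|) hi

theorem Finset.sup'_abs_sub_le_sup'_abs_sub_add (x z : ℝ) :
    s.sup' hs (fun i => |q i - x|) ≤ s.sup' hs (fun i => |q i - z|) + |z - x| :=
  Finset.sup'_le _ _ fun i hi =>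
    (abs_sub_le _ z _).trans (by gcongr; exact s.le_sup' (fun i => |q i - z|) hi)

theorem Finset.abs_sub_le_two_mul_sup'_abs_sub {y o : ℝ}
    (h : |s.sup' hs q - y| ≤ |s.sup' hs q - o|) :
    |y - o| ≤ 2 * s.sup' hs (fun i => |q i - o|) := by
  have hM := s.abs_sup'_sub_le_sup'_abs_sub hs q o
  have := abs_sub_le y (s.sup' hs q) o
  rw [abs_sub_comm y (s.sup' hs q)] at this
  linarith

end Distances

theorem one_sub_mul_sum_le_three_sub_mul_sum {ι : Type*} [Fintype ι] (S : Finset ι)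
    (cw co : ι → ℝ) {δ α : ℝ} (hδ : 0 ≤ δ) (hα : α ≤ 1) (hco : ∀ i, 0 ≤ co i)
    (hcw : ∀ i, cw i ≤ co i + δ) (hS : ∀ i ∈ S, δ ≤ 2 * co i)
    (hcard : (1 - α) * Fintype.card ι ≤ #S) :
    (1 - α) * ∑ i, cw i ≤ (3 - α) * ∑ i, co i := by
  have hsum : ∑ i, cw i ≤ ∑ i, co i + Fintype.card ι * δ := by
    have := Finset.sum_le_sum fun i (_ : i ∈ Finset.univ) => hcw i
    rwa [Finset.sum_add_distrib, Finset.sum_const, Finset.card_univ, nsmul_eq_mul] at this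
  have hSsum : #S * δ ≤ 2 * ∑ i, co i :=
    calc #S * δ = #S • δ := (nsmul_eq_mul _ _).symm
      _ ≤ ∑ i ∈ S, 2 * co i := S.card_nsmul_le_sum _ _ hS
      _ ≤ 2 * ∑ i, co i := by
        rw [← Finset.mul_sum]
        exact mul_le_mul_of_nonneg_left (S.sum_le_univ_sum_of_nonneg fun i => hco i) two_pos.le
  nlinarith [mul_le_mul_of_nonneg_right hcard hδ]

theorem stmt_13 (k : ℕ) (A : Finset ℝ)
    (n : Fin (k + 1) → ℕ) (p : (d : Fin (k + 1)) → Fin (n d + 1) → ℝ)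
    (y : Fin (k + 1) → ℝ)
    (hy : ∀ d, y d ∈ A ∧ ∀ a ∈ A,
      |Finset.univ.sup' Finset.univ_nonempty (p d) - y d| ≤
        |Finset.univ.sup' Finset.univ_nonempty (p d) - a|)
    (α : ℝ) (h0 : 0 < α) (h1 : α < 1)
    (w : ℝ)
    (hw : (Multiset.sort
        (Multiset.map y (Finset.univ : Finset (Fin (k + 1))).val) (· ≤ ·))[⌈α * (k + 1 : ℕ)⌉₊ - 1]?
      = some w)
    (o : ℝ) (ho : o ∈ A) (how : o < w) :
    (1 / (k + 1 : ℕ) : ℝ) *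
        ∑ d, Finset.univ.sup' Finset.univ_nonempty (fun i => |p d i - w|) ≤
      ((3 - α) / (1 - α)) *
        ((1 / (k + 1 : ℕ) : ℝ) *
          ∑ d, Finset.univ.sup' Finset.univ_nonempty (fun i => |p d i - o|)) := by
  set S : Finset (Fin (k + 1)) := {d | w ≤ y d}
  have hcard : (1 - α) * Fintype.card (Fin (k + 1)) ≤ #S := by
    have hcount : k + 1 - (⌈α * (k + 1 : ℕ)⌉₊ - 1) ≤ #S := by
      simpa using univ.card_sub_le_card_filter_le_of_sort y hw
    have hceil := Nat.cast_ceil_sub_one_le (by positivity : 0 ≤ α * (k + 1 : ℕ))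
    have hsub : ((k + 1 : ℕ) : ℝ) ≤ #S + (⌈α * (k + 1 : ℕ)⌉₊ - 1 : ℕ) :=
      mod_cast le_tsub_add.trans (Nat.add_le_add_right hcount _)
    rw [Fintype.card_fin]
    linarith
  have hfar : ∀ d ∈ S, |o - w| ≤ 2 * univ.sup' univ_nonempty (fun i => |p d i - o|) := by
    intro d hd
    rw [abs_sub_comm, abs_of_pos (sub_pos.mpr how)]
    calc w - o ≤ y d - o := by linarith [(mem_filter.mp hd).2]
      _ ≤ |y d - o| := le_abs_self _
      _ ≤ _ := univ.abs_sub_le_two_mul_sup'_abs_sub univ_nonempty (p d) ((hy d).2 o ho)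
  have hsum := one_sub_mul_sum_le_three_sub_mul_sum S _ _ (abs_nonneg (o - w)) h1.le
    (fun d => (abs_nonneg _).trans (univ.abs_sup'_sub_le_sup'_abs_sub univ_nonempty (p d) o))
    (fun d => univ.sup'_abs_sub_le_sup'_abs_sub_add univ_nonempty (p d) w o) hfar hcard
  rw [mul_left_comm]
  gcongr
  rwa [div_mul_eq_mul_div, le_div_iff₀' (sub_pos.mpr h1)]
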